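/- arXiv:2605.11909 — 3 statements merged into one kernel-verified Lean document; each statement's English description precedes it below -/
import Mathlib

section
/- The Weyl group W(E_6), realized as the automorphism group of the Schläfli graph, has order 51840. -/
/-- A 2-element subset of `{1,…,6}` (indexing a line `F_{ij}`, `i<j`). -/
abbrev IndexPair := {s : Finset (Fin 6) // s.card = 2}

/-- Vertices of the Schläfli graph: the 27 lines `E_i`, `F_{ij}`, `G_j`
    on a smooth cubic surface. -/
inductive SchlafliVertex
  | E : Fin 6 → SchlafliVertex
  | F : IndexPair → SchlafliVertex
  | G : Fin 6 → SchlafliVertex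
  deriving DecidableEq, Fintype

open SchlafliVertex in
/-- Adjacency (intersection of the corresponding lines). -/
def schlafliAdj : SchlafliVertex → SchlafliVertex → Bool
  | E i, F s => i ∈ s.1
  | F s, E i => i ∈ s.1
  | E i, G j => i ≠ j
  | G j, E i => i ≠ j
  | F s, F t => s.1 ∩ t.1 = ∅
  | G i, F s => i ∈ s.1
  | F s, G i => i ∈ s.1
  | _, _ => false

/-- The Schläfli graph of the 27 lines on a smooth cubic surface. -/
def schlafliGraph : SimpleGraph SchlafliVertex where
  Adj a b := schlafliAdj a b = true
  symm := by
    have h : ∀ a b, schlafliAdj a b = true → schlafliAdj b a = true := by decide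
    exact ⟨fun a b hab => h a b hab⟩
  loopless := by
    have h : ∀ a, ¬ schlafliAdj a a = true := by decide
    exact ⟨fun a => h a⟩

instance : DecidableRel schlafliGraph.Adj :=
  fun a b => inferInstanceAs (Decidable (_ = true))

/-!
Stabilizer chain along the base `E 0, E 1, E 2, E 3, G 4, E 4`. An automorphism fixing the
first `k` base points preserves adjacency to them, so it sends the next base point into its
cell: the vertices outside the fixed ones with the same adjacencies to them. Conversely each
cell is swept out from the base point by index transpositions and conjugates of the given
involution that fix the earlier base points, so the cells are exactly the orbits of the
successive pointwise stabilizers. They have sizes `27, 16, 10, 6, 2, 1`, and the last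
stabilizer is trivial because vertices off the base are separated by their adjacencies to it;
orbit–stabilizer gives `27 * 16 * 10 * 6 * 2 = 51840`.
-/

open MulAction Finset

section FixingSubgroup

variable {M α : Type*} [Group M] [MulAction M α]

theorem card_fixingSubgroup_empty : Nat.card (fixingSubgroup M (∅ : Set α)) = Nat.card M := by
  rw [fixingSubgroup_empty, Subgroup.card_top]

theorem card_stabilizer_fixingSubgroup (s : Set α) (x : α) :
    Nat.card (stabilizer (fixingSubgroup M s) x) = Nat.card (fixingSubgroup M (insert x s)) :=
  Nat.card_congr
    { toFun h := ⟨h.1.1, SubMulAction.mem_fixingSubgroup_insert_iff.2 ⟨h.2, h.1.2⟩⟩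
      invFun m := ⟨⟨m.1, (SubMulAction.mem_fixingSubgroup_insert_iff.1 m.2).2⟩,
        (SubMulAction.mem_fixingSubgroup_insert_iff.1 m.2).1⟩ }

theorem card_fixingSubgroup_eq_card_orbit_mul (s : Set α) (x : α) :
    Nat.card (fixingSubgroup M s) =
      Nat.card (orbit (fixingSubgroup M s) x) * Nat.card (fixingSubgroup M (insert x s)) := by
  rw [← card_stabilizer_fixingSubgroup, ← Nat.card_prod,
    Nat.card_congr (orbitProdStabilizerEquivGroup (fixingSubgroup M s) x)]

variable [DecidableEq α]

def MulAction.reach (gens : List M) : ℕ → α → Finset α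
  | 0, x => {x}
  | n + 1, x => reach gens n x ∪ (reach gens n x).biUnion fun y => (gens.map (· • y)).toFinset

theorem MulAction.reach_subset_orbit {H : Subgroup M} {gens : List M}
    (hgens : ∀ g ∈ gens, g ∈ H) (n : ℕ) (x : α) : ↑(reach gens n x) ⊆ orbit H x := by
  induction n with
  | zero => simp [reach, mem_orbit_self]
  | succ n ih =>
    intro z hz
    simp only [reach, coe_union, Set.mem_union, mem_coe, mem_biUnion, List.mem_toFinset,
      List.mem_map] at hz
    rcases hz with hz | ⟨y, hy, g, hg, rfl⟩
    · exact ih hz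
    · exact mem_orbit_of_mem_orbit (⟨g, hgens g hg⟩ : H) (ih hy)

end FixingSubgroup

namespace SimpleGraph

variable {V : Type*} (G : SimpleGraph V) [DecidableEq V] [Fintype V] [DecidableRel G.Adj]

def adjCell (s : Finset V) (x : V) : Finset V :=
  {v | v ∉ s ∧ ∀ y ∈ s, G.Adj v y ↔ G.Adj x y}

variable {G}

theorem orbit_fixingSubgroup_subset_adjCell {s : Finset V} {x : V} (hx : x ∉ s) :
    orbit (fixingSubgroup (G ≃g G) (s : Set V)) x ⊆ G.adjCell s x := by
  rintro _ ⟨⟨φ, hφ⟩, rfl⟩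
  have hfix : ∀ y ∈ s, φ y = y := fun y hy => (mem_fixingSubgroup_iff _).1 hφ y hy
  simp only [adjCell, coe_filter, mem_univ, true_and, Set.mem_ofPred_eq, Subgroup.mk_smul,
    RelIso.smul_def]
  refine ⟨fun h => hx ?_, fun y hy => ?_⟩
  · rwa [← φ.injective (hfix _ h)]
  · simpa only [hfix y hy] using φ.map_adj_iff (v := x) (w := y)

theorem card_fixingSubgroup_eq_card_adjCell_mul (s : Finset V) (x : V) (gens : List (G ≃g G))
    (n : ℕ) (hx : x ∉ s) (hgens : ∀ g ∈ gens, ∀ y ∈ s, g y = y)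
    (hreach : G.adjCell s x ⊆ reach gens n x) :
    Nat.card (fixingSubgroup (G ≃g G) (s : Set V)) =
      #(G.adjCell s x) * Nat.card (fixingSubgroup (G ≃g G) ((insert x s : Finset V) : Set V)) := by
  have horbit : orbit (fixingSubgroup (G ≃g G) (s : Set V)) x = G.adjCell s x :=
    (orbit_fixingSubgroup_subset_adjCell hx).antisymm <| (coe_subset.2 hreach).trans <|
      reach_subset_orbit (fun g hg => (mem_fixingSubgroup_iff _).2 (hgens g hg)) n x
  rw [card_fixingSubgroup_eq_card_orbit_mul _ x, horbit, Nat.card_coe_set_eq,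
    Set.ncard_coe_finset, coe_insert]

theorem card_fixingSubgroup_eq_one_of_adjCell_eq_singleton {s : Finset V}
    (hs : ∀ v ∉ s, G.adjCell s v = {v}) :
    Nat.card (fixingSubgroup (G ≃g G) (s : Set V)) = 1 := by
  refine Nat.card_eq_one_iff_unique.2 ⟨⟨fun φ ψ => ?_⟩, ⟨1⟩⟩
  suffices h : ∀ φ : fixingSubgroup (G ≃g G) (s : Set V), φ = 1 by rw [h φ, h ψ]
  intro φ
  ext v
  by_cases hv : v ∈ s
  · exact (mem_fixingSubgroup_iff _).1 φ.2 v hv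
  · have hφv := orbit_fixingSubgroup_subset_adjCell hv (mem_orbit v φ)
    rwa [hs v hv, coe_singleton] at hφv

end SimpleGraph

theorem Finset.filter_symm_apply_mem_eq_map {α : Type*} [Fintype α] [DecidableEq α]
    (σ : Equiv.Perm α) (s : Finset α) :
    ({j | σ.symm j ∈ s} : Finset α) = s.map σ.toEmbedding := by
  ext j
  simp

namespace SchlafliVertex

open Equiv

/-- The image of a pair is written as a filter of `univ` rather than with `Finset.map` to keep
its underlying list sorted: the derived `DecidableEq` only evaluates on two equal pairs when their
lists coincide, and the `decide` computations below depend on it. -/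
def permute (σ : Perm (Fin 6)) : SchlafliVertex → SchlafliVertex
  | E i => E (σ i)
  | F s => F ⟨({j | σ.symm j ∈ s.1} : Finset (Fin 6)), by
      rw [filter_symm_apply_mem_eq_map, card_map, s.2]⟩
  | G i => G (σ i)

theorem permute_mul (σ τ : Perm (Fin 6)) (v : SchlafliVertex) :
    permute (σ * τ) v = permute σ (permute τ v) := by
  cases v <;> simp only [permute, filter_symm_apply_mem_eq_map, map_map] <;> rfl

theorem permute_one (v : SchlafliVertex) : permute 1 v = v := by
  cases v <;> simp only [permute, filter_symm_apply_mem_eq_map, Perm.coe_one, id_eq]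
  exact congrArg F (Subtype.ext map_refl)

theorem schlafliAdj_permute (σ : Perm (Fin 6)) (a b : SchlafliVertex) :
    schlafliAdj (permute σ a) (permute σ b) = schlafliAdj a b := by
  cases a <;> cases b <;>
    simp [permute, filter_symm_apply_mem_eq_map, schlafliAdj, ← map_inter]

def permAut (σ : Perm (Fin 6)) : schlafliGraph ≃g schlafliGraph where
  toFun := permute σ
  invFun := permute σ⁻¹
  left_inv v := by rw [← permute_mul, inv_mul_cancel, permute_one]
  right_inv v := by rw [← permute_mul, mul_inv_cancel, permute_one]
  map_rel_iff' {a b} := by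
    change schlafliAdj (permute σ a) (permute σ b) = true ↔ schlafliAdj a b = true
    rw [schlafliAdj_permute]

def transpositionsAbove (k : Fin 6) : List (schlafliGraph ≃g schlafliGraph) :=
  (((List.finRange 6).product (List.finRange 6)).filter fun p => k ≤ p.1 ∧ p.1 < p.2).map
    fun p => permAut (swap p.1 p.2)

def pair (i j : Fin 6) (h : i ≠ j := by decide) : IndexPair := ⟨{i, j}, card_pair h⟩

/-- The involution of the statement with indices shifted down by one: `F₁₃ ↔ G₅` becomes
`F (pair 0 2) ↔ G 4`, and so on. It fixes `E 0`, `E 2`, `E 4`. -/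
def cremona : schlafliGraph ≃g schlafliGraph where
  toEquiv := swap (F (pair 0 2)) (G 4) * swap (F (pair 0 4)) (G 2) * swap (F (pair 2 4)) (G 0) *
    swap (F (pair 1 3)) (E 5) * swap (F (pair 1 5)) (E 3) * swap (F (pair 3 5)) (E 1)
  map_rel_iff' {a b} := by
    revert a b
    decide

end SchlafliVertex

open SchlafliVertex Equiv SimpleGraph

/-- The Weyl group `W(E₆)`, realized as the automorphism group of the
Schläfli graph, has order 51840. -/
theorem schlafli_automorphism_group_order :
    Nat.card (schlafliGraph ≃g schlafliGraph) = 51840 := by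
  rw [← card_fixingSubgroup_empty (α := SchlafliVertex), ← Finset.coe_empty,
    card_fixingSubgroup_eq_card_adjCell_mul ∅ (E 0) (cremona :: transpositionsAbove 0) 6
      (by decide +kernel) (by decide +kernel) (by decide +kernel), Finset.insert_empty,
    card_fixingSubgroup_eq_card_adjCell_mul {E 0} (E 1) (cremona :: transpositionsAbove 1) 4
      (by decide +kernel) (by decide +kernel) (by decide +kernel),
    card_fixingSubgroup_eq_card_adjCell_mul {E 1, E 0} (E 2)
      (MulAut.conj (permAut (swap 1 2)) cremona :: transpositionsAbove 2) 3
      (by decide +kernel) (by decide +kernel) (by decide +kernel),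
    card_fixingSubgroup_eq_card_adjCell_mul {E 2, E 1, E 0} (E 3)
      (MulAut.conj (permAut (swap 1 4)) cremona :: transpositionsAbove 3) 2
      (by decide +kernel) (by decide +kernel) (by decide +kernel),
    card_fixingSubgroup_eq_card_adjCell_mul {E 3, E 2, E 1, E 0} (G 4) (transpositionsAbove 4) 1
      (by decide +kernel) (by decide +kernel) (by decide +kernel),
    card_fixingSubgroup_eq_card_adjCell_mul {G 4, E 3, E 2, E 1, E 0} (E 4) [] 0
      (by decide +kernel) (by decide +kernel) (by decide +kernel),
    card_fixingSubgroup_eq_one_of_adjCell_eq_singleton (by decide +kernel)]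
  decide +kernel
end

section
/- The system of pentagon u-equations u_1 + u_3 u_4 = u_2 + u_4 u_5 = u_3 + u_1 u_5 = u_4 + u_1 u_2 = u_5 + u_2 u_3 = 1 admits the solution u_1 = t_1/(1+t_1), u_2 = t_2(1+t_1)/(1+t_2+t_1t_2), u_3 = (1+t_2+t_1t_2)/((1+t_1)(1+t_2)), u_4 = (1+t_2)/(1+t_2+t_1t_2), u_5 = 1/(1+t_2), for all t_1, t_2 > 0. -/
/-- For all `t₁, t₂ > 0`, the given rational functions of `t₁, t₂` solve the
pentagon u-equations
`u₁ + u₃u₄ = u₂ + u₄u₅ = u₃ + u₁u₅ = u₄ + u₁u₂ = u₅ + u₂u₃ = 1`. -/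
theorem pentagon_u_equations_parametrization (t₁ t₂ : ℝ) (h₁ : 0 < t₁) (h₂ : 0 < t₂) :
    let u₁ : ℝ := t₁ / (1 + t₁)
    let u₂ : ℝ := t₂ * (1 + t₁) / (1 + t₂ + t₁ * t₂)
    let u₃ : ℝ := (1 + t₂ + t₁ * t₂) / ((1 + t₁) * (1 + t₂))
    let u₄ : ℝ := (1 + t₂) / (1 + t₂ + t₁ * t₂)
    let u₅ : ℝ := 1 / (1 + t₂)
    u₁ + u₃ * u₄ = 1 ∧ u₂ + u₄ * u₅ = 1 ∧ u₃ + u₁ * u₅ = 1 ∧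
      u₄ + u₁ * u₂ = 1 ∧ u₅ + u₂ * u₃ = 1 := by
  have ha : (1 + t₁) ≠ 0 := by positivity
  have hb : (1 + t₂) ≠ 0 := by positivity
  have hc : (1 + t₂ + t₁ * t₂) ≠ 0 := by positivity
  refine ⟨?_, ?_, ?_, ?_, ?_⟩ <;> field_simp <;> ring
end

section
/- Let Δ be the simplicial complex on vertex set {1,...,15} whose 45 facets are the 4-element index sets appearing in the denominators of the E6 amplitude (the normal fan complex of the E6 pezzotope). Then Δ has exactly 60 edges, 90 triangles, and 45 tetrahedra, and a 4-polytope with this normal fan is simple with f-vector (45, 90, 60, 15). -/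
open Finset

/-- The 45 facets (tetrahedra) of the simplicial complex `Δ`: the 4-element
index sets (0-based, shifted from the paper's 1-based labels `s₁,…,s₁₅`)
appearing in the denominators of the `E₆` amplitude. -/
def pezzoFacets : Finset (Finset (Fin 15)) :=
  {{9, 14, 3, 5},
   {9, 14, 1, 6},
   {14, 1, 4, 5},
   {14, 3, 4, 6},
   {14, 1, 4, 6},
   {14, 3, 4, 5},
   {9, 14, 3, 6},
   {9, 14, 1, 5},
   {12, 2, 7, 8},
   {12, 1, 2, 6},
   {12, 1, 4, 8},
   {12, 4, 6, 7},
   {12, 1, 4, 6},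
   {12, 4, 7, 8},
   {12, 2, 6, 7},
   {12, 1, 2, 8},
   {0, 13, 7, 8},
   {0, 13, 3, 5},
   {13, 4, 5, 8},
   {13, 3, 4, 7},
   {13, 3, 4, 5},
   {13, 4, 7, 8},
   {0, 13, 3, 7},
   {0, 13, 5, 8},
   {0, 11, 2, 7},
   {0, 9, 11, 3},
   {9, 11, 2, 6},
   {11, 3, 6, 7},
   {9, 11, 3, 6},
   {11, 2, 6, 7},
   {0, 11, 3, 7},
   {0, 9, 11, 2},
   {0, 10, 2, 8},
   {0, 9, 10, 5},
   {9, 10, 1, 2},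
   {10, 1, 5, 8},
   {9, 10, 1, 5},
   {10, 1, 2, 8},
   {0, 10, 5, 8},
   {0, 9, 10, 2},
   {0, 2, 7, 8},
   {0, 3, 5, 9},
   {1, 2, 6, 9},
   {1, 4, 5, 8},
   {3, 4, 6, 7}}

/-- Two vertices span an edge of `Δ` iff they lie in a common facet. -/
def pezzoEdge (i j : Fin 15) : Prop :=
  i ≠ j ∧ ∃ f ∈ pezzoFacets, i ∈ f ∧ j ∈ f

instance : DecidableRel pezzoEdge := fun i j => by
  unfold pezzoEdge; infer_instance

/-- `Δ` is the clique complex of its edge graph: a set of vertices is a face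
iff all of its pairs are edges. -/
def pezzoFace (s : Finset (Fin 15)) : Prop :=
  ∀ i ∈ s, ∀ j ∈ s, i ≠ j → pezzoEdge i j

instance : DecidablePred pezzoFace := fun s => by
  unfold pezzoFace; infer_instance

lemma filter_card_eq (P : Finset (Fin 15) → Prop) [DecidablePred P] (k : ℕ) :
    (univ.filter (fun s : Finset (Fin 15) => s.card = k ∧ P s)) =
      (powersetCard k (univ : Finset (Fin 15))).filter P := by
  ext s
  simp [Finset.mem_powersetCard, Finset.subset_univ, and_comm]

set_option maxRecDepth 40000 in
set_option maxHeartbeats 4000000 in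
/-- The complex `Δ` (the normal fan complex of the `E₆` pezzotope) has
15 vertices, 60 edges, 90 triangles, and 45 tetrahedra; dually, a simple
4-polytope with normal fan `Δ` has f-vector `(45, 90, 60, 15)`: 45 vertices
(tetrahedra of `Δ`), 90 edges (triangles), 60 two-faces (edges), 15 facets
(vertices). -/
theorem pezzotope_complex_face_counts :
    (univ.filter (fun s : Finset (Fin 15) => s.card = 2 ∧ pezzoFace s)).card = 60 ∧
    (univ.filter (fun s : Finset (Fin 15) => s.card = 3 ∧ pezzoFace s)).card = 90 ∧
    (univ.filter (fun s : Finset (Fin 15) => s.card = 4 ∧ pezzoFace s)).card = 45 ∧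
    Fintype.card (Fin 15) = 15 := by
  refine ⟨?_, ?_, ?_, rfl⟩ <;> rw [filter_card_eq] <;> decide
end
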